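/- Let G be a group with finite generating set X and word metric d. If there exists l ≥ 1 such that every z ∈ C_1^1(G) with ∂₁ z = 0 satisfies z = ∂₂ c for some c ∈ C_2^l(G), then G is of type FP₂. -/

import Mathlib

open Finsupp

variable {G : Type*} [Group G]

/-- Word length with respect to a generating set `X`. -/
noncomputable def wordLength (X : Finset G) (g : G) : ℕ :=
  sInf {n : ℕ | ∃ w : List G, w.length = n ∧ (∀ x ∈ w, x ∈ X ∨ x⁻¹ ∈ X) ∧ w.prod = g}

/-- The left-invariant word metric `d(g,h) = l(g⁻¹h)`. -/
noncomputable def wordDist (X : Finset G) (g h : G) : ℕ :=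
  wordLength X (g⁻¹ * h)

/-- `c` is a chain in `C_q^k(S)`: its support consists of `(q+1)`-tuples of elements of `S`
that are pairwise at distance at most `k`. -/
def VRChain (X : Finset G) (S : Set G) (q k : ℕ) (c : (Fin (q + 1) → G) →₀ ℤ) : Prop :=
  ∀ σ ∈ c.support, (∀ i, σ i ∈ S) ∧ ∀ i j, wordDist X (σ i) (σ j) ≤ k

/-- The simplicial boundary map `∂_{q+1} : ℤ[G^{q+2}] → ℤ[G^{q+1}]`. -/
noncomputable def bnd (q : ℕ) :
    ((Fin (q + 2) → G) →₀ ℤ) →ₗ[ℤ] ((Fin (q + 1) → G) →₀ ℤ) :=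
  Finsupp.lift _ ℤ _
    (fun σ => ∑ i : Fin (q + 2), ((-1 : ℤ) ^ (i : ℕ)) • Finsupp.single (σ ∘ i.succAbove) (1 : ℤ))

/-- The augmentation `ε : ℤ[G] → ℤ` sending every vertex to `1`. -/
noncomputable def aug : ((Fin 1 → G) →₀ ℤ) →ₗ[ℤ] ℤ :=
  Finsupp.lift ℤ ℤ (Fin 1 → G) (fun _ => (1 : ℤ))

/-- Reduced `q`-cycles at scale `k` on `S` bound at scale `l` on `S`. -/
def BoundsAt (X : Finset G) (S : Set G) : ℕ → ℕ → ℕ → Prop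
  | 0, k, l => ∀ z : (Fin 1 → G) →₀ ℤ, VRChain X S 0 k z → aug z = 0 →
      ∃ c : (Fin 2 → G) →₀ ℤ, VRChain X S 1 l c ∧ bnd 0 c = z
  | (q + 1), k, l => ∀ z : (Fin (q + 2) → G) →₀ ℤ, VRChain X S (q + 1) k z → bnd q z = 0 →
      ∃ c : (Fin (q + 3) → G) →₀ ℤ, VRChain X S (q + 2) l c ∧ bnd (q + 1) c = z

/-- `S ⊆ G` is of type `FP_m`. -/
def TypeFP (X : Finset G) (S : Set G) (m : ℕ) : Prop :=
  ∀ q < m, ∀ k : ℕ, ∃ l ≥ k, BoundsAt X S q k l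

/-- A character on `G` is a homomorphism to the additive reals. -/
def IsCharacter (χ : G → ℝ) : Prop :=
  ∀ g h : G, χ (g * h) = χ g + χ h

/-- Simultaneous left translation on chains, making `ℤ[G^{q+1}]` a `ℤG`-module. -/
noncomputable def lTranslate (g : G) (q : ℕ) :
    ((Fin (q + 1) → G) →₀ ℤ) →ₗ[ℤ] ((Fin (q + 1) → G) →₀ ℤ) :=
  Finsupp.lmapDomain ℤ ℤ (fun σ i => g * σ i)

/-- A chain endomorphism of `ℤG`-complexes on `(C_q^k(G))_{q=0,…,m}` extending the identity
on `ℤ`: each `φ q` maps scale-`k` chains to scale-`k` chains, is `G`-equivariant,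
satisfies `ε ∘ φ₀ = ε` and commutes with the boundary maps. -/
def IsChainEndo (X : Finset G) (k m : ℕ)
    (φ : ∀ q : ℕ, ((Fin (q + 1) → G) →₀ ℤ) →ₗ[ℤ] ((Fin (q + 1) → G) →₀ ℤ)) : Prop :=
  (∀ q ≤ m, ∀ c, VRChain X Set.univ q k c → VRChain X Set.univ q k (φ q c)) ∧
  (∀ q ≤ m, ∀ (g : G) (c), VRChain X Set.univ q k c →
    φ q (lTranslate g q c) = lTranslate g q (φ q c)) ∧
  (∀ c : (Fin 1 → G) →₀ ℤ, VRChain X Set.univ 0 k c → aug (φ 0 c) = aug c) ∧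
  (∀ q : ℕ, q + 1 ≤ m → ∀ c : (Fin (q + 2) → G) →₀ ℤ, VRChain X Set.univ (q + 1) k c →
    bnd q (φ (q + 1) c) = φ q (bnd q c))

/-- The valuation of a simplex: `v(σ) = min_i χ(g_i)` (with values in `EReal`). -/
noncomputable def vsimp (χ : G → ℝ) {q : ℕ} (σ : Fin (q + 1) → G) : EReal :=
  ⨅ i, (χ (σ i) : EReal)

/-- The valuation of a chain: the minimum of the valuations of the simplices in its support
(`⊤` for the zero chain). -/
noncomputable def vchain (χ : G → ℝ) {q : ℕ} (c : (Fin (q + 1) → G) →₀ ℤ) : EReal :=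
  ⨅ σ ∈ c.support, vsimp χ σ

/-!
Any `1`-cycle at scale `k` is homologous, at scale `max k 1`, to a `1`-cycle at scale `1`:
replace each edge `(a, b)` by the edge path along a geodesic word from `a` to `b`, and fill
the gap between the edge and the path by the fan of triangles with apex `a`, whose vertices
are pairwise within distance `max k 1`. So if `1`-cycles at scale `1` bound at scale `l`, then
`1`-cycles at scale `k` bound at scale `max l k`. In degree `0` nothing is needed: joining every
vertex to `1` by a geodesic path bounds any `0`-chain of augmentation `0`.
-/

section WordMetric

variable (X : Finset G)

theorem wordLength_le_length {g : G} {w : List G} (hw : ∀ x ∈ w, x ∈ X ∨ x⁻¹ ∈ X)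
    (hg : w.prod = g) : wordLength X g ≤ w.length :=
  Nat.sInf_le ⟨w, rfl, hw, hg⟩

theorem exists_word_length_eq_wordLength (hX : Subgroup.closure (X : Set G) = ⊤) (g : G) :
    ∃ w : List G, w.length = wordLength X g ∧ (∀ x ∈ w, x ∈ X ∨ x⁻¹ ∈ X) ∧ w.prod = g := by
  have hg : g ∈ Submonoid.closure ((X : Set G) ∪ (X : Set G)⁻¹) := by
    rw [← Subgroup.closure_toSubmonoid, hX]
    trivial
  obtain ⟨w, hw, hwg⟩ := Submonoid.exists_list_of_mem_closure hg
  have hne : Set.Nonempty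
      {n | ∃ w : List G, w.length = n ∧ (∀ x ∈ w, x ∈ X ∨ x⁻¹ ∈ X) ∧ w.prod = g} :=
    ⟨w.length, w, rfl, fun x hx => by simpa using hw x hx, hwg⟩
  exact Nat.sInf_mem hne

theorem wordDist_self (g : G) : wordDist X g g = 0 := by
  simpa [wordDist] using wordLength_le_length X (g := 1) (w := []) (by simp) rfl

theorem wordDist_mul_le_one {x : G} (hx : x ∈ X ∨ x⁻¹ ∈ X) (g : G) :
    wordDist X g (g * x) ≤ 1 := by
  simpa [wordDist] using wordLength_le_length X (w := [x]) (by simpa using hx) (by simp)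

variable {X}

theorem wordLength_mul_le (hX : Subgroup.closure (X : Set G) = ⊤) (g h : G) :
    wordLength X (g * h) ≤ wordLength X g + wordLength X h := by
  obtain ⟨u, hu, huX, rfl⟩ := exists_word_length_eq_wordLength X hX g
  obtain ⟨v, hv, hvX, rfl⟩ := exists_word_length_eq_wordLength X hX h
  rw [← hu, ← hv, ← List.length_append, ← List.prod_append]
  exact wordLength_le_length X (fun x hx => (List.mem_append.1 hx).elim (huX x) (hvX x)) rfl

theorem wordLength_inv_le (hX : Subgroup.closure (X : Set G) = ⊤) (g : G) :
    wordLength X g⁻¹ ≤ wordLength X g := by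
  obtain ⟨w, hw, hwX, rfl⟩ := exists_word_length_eq_wordLength X hX g
  rw [← hw, List.prod_inv_reverse, ← List.length_map (f := fun x : G => x⁻¹),
    ← List.length_reverse]
  refine wordLength_le_length X (fun x hx => ?_) rfl
  obtain ⟨y, hy, rfl⟩ := List.mem_map.1 (List.mem_reverse.1 hx)
  simpa [or_comm] using hwX y hy

theorem wordDist_comm (hX : Subgroup.closure (X : Set G) = ⊤) (g h : G) :
    wordDist X g h = wordDist X h g := by
  have h₁ := wordLength_inv_le hX (g⁻¹ * h)
  have h₂ := wordLength_inv_le hX (h⁻¹ * g)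
  simp only [mul_inv_rev, inv_inv] at h₁ h₂
  exact le_antisymm h₂ h₁

theorem wordDist_triangle (hX : Subgroup.closure (X : Set G) = ⊤) (a b c : G) :
    wordDist X a c ≤ wordDist X a b + wordDist X b c := by
  simpa [wordDist, mul_assoc] using wordLength_mul_le hX (a⁻¹ * b) (b⁻¹ * c)

end WordMetric

section Chains

variable {α : Type*}

noncomputable def vertex (a : α) : (Fin 1 → α) →₀ ℤ := Finsupp.single ![a] 1

noncomputable def edge (a b : α) : (Fin 2 → α) →₀ ℤ := Finsupp.single ![a, b] 1

noncomputable def triangle (a b c : α) : (Fin 3 → α) →₀ ℤ := Finsupp.single ![a, b, c] 1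

theorem single_eq_smul_vertex (σ : Fin 1 → α) (n : ℤ) :
    Finsupp.single σ n = n • vertex (σ 0) := by
  rw [vertex, Finsupp.smul_single_one]
  congr 1
  ext i
  fin_cases i
  rfl

theorem single_eq_smul_edge (σ : Fin 2 → α) (n : ℤ) :
    Finsupp.single σ n = n • edge (σ 0) (σ 1) := by
  rw [edge, Finsupp.smul_single_one]
  congr 1
  ext i
  fin_cases i <;> rfl

theorem single_eq_smul_triangle (σ : Fin 3 → α) (n : ℤ) :
    Finsupp.single σ n = n • triangle (σ 0) (σ 1) (σ 2) := by
  rw [triangle, Finsupp.smul_single_one]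
  congr 1
  ext i
  fin_cases i <;> rfl

theorem bnd_single (q : ℕ) (σ : Fin (q + 2) → α) :
    bnd q (Finsupp.single σ 1) =
      ∑ i : Fin (q + 2), ((-1 : ℤ) ^ (i : ℕ)) • Finsupp.single (σ ∘ i.succAbove) 1 := by
  simp [bnd]

theorem bnd_edge (a b : α) : bnd 0 (edge a b) = vertex b - vertex a := by
  have h₀ : ![a, b] ∘ (0 : Fin 2).succAbove = ![b] := by ext i; fin_cases i; rfl
  have h₁ : ![a, b] ∘ (1 : Fin 2).succAbove = ![a] := by ext i; fin_cases i; rfl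
  rw [edge, bnd_single, Fin.sum_univ_two, h₀, h₁]
  simp [vertex, sub_eq_add_neg]

theorem bnd_triangle (a b c : α) :
    bnd 1 (triangle a b c) = edge b c - edge a c + edge a b := by
  have h₀ : ![a, b, c] ∘ (0 : Fin 3).succAbove = ![b, c] := by ext i; fin_cases i <;> rfl
  have h₁ : ![a, b, c] ∘ (1 : Fin 3).succAbove = ![a, c] := by ext i; fin_cases i <;> rfl
  have h₂ : ![a, b, c] ∘ (2 : Fin 3).succAbove = ![a, b] := by ext i; fin_cases i <;> rfl
  rw [triangle, bnd_single, Fin.sum_univ_three, h₀, h₁, h₂]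
  simp [edge, sub_eq_add_neg]

theorem bnd_bnd (c : (Fin 3 → α) →₀ ℤ) : bnd 0 (bnd 1 c) = 0 := by
  suffices (bnd 0).comp (bnd 1) = (0 : ((Fin 3 → α) →₀ ℤ) →ₗ[ℤ] (Fin 1 → α) →₀ ℤ) from
    LinearMap.congr_fun this c
  refine Finsupp.lhom_ext fun σ n => ?_
  rw [LinearMap.comp_apply, single_eq_smul_triangle, map_smul, bnd_triangle, map_smul, map_add,
    map_sub, bnd_edge, bnd_edge, bnd_edge, LinearMap.zero_apply]
  abel_nf

end Chains

section Paths

variable {M : Type*} [Monoid M]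

noncomputable def edgePath : M → List M → (Fin 2 → M) →₀ ℤ
  | _, [] => 0
  | a, x :: w => edge a (a * x) + edgePath (a * x) w

theorem bnd_edgePath (a : M) (w : List M) :
    bnd 0 (edgePath a w) = vertex (a * w.prod) - vertex a := by
  induction w generalizing a with
  | nil => simp [edgePath]
  | cons x w ih =>
    simp only [edgePath, map_add, bnd_edge, ih, List.prod_cons, mul_assoc]
    abel

noncomputable def fan (a : M) : M → List M → (Fin 3 → M) →₀ ℤ
  | _, [] => 0
  | b, x :: w => triangle a b (b * x) + fan a (b * x) w

theorem bnd_fan (a b : M) (w : List M) :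
    bnd 1 (fan a b w) = edgePath b w + edge a b - edge a (b * w.prod) := by
  induction w generalizing b with
  | nil => simp [fan, edgePath]
  | cons x w ih =>
    simp only [fan, map_add, bnd_triangle, ih, edgePath, List.prod_cons, mul_assoc]
    abel

/-- The degenerate triangle `(a, a, a)` cancels the degenerate edge `(a, a)` of the fan. -/
noncomputable def edgeFilling (a : M) (w : List M) : (Fin 3 → M) →₀ ℤ :=
  triangle a a a - fan a a w

theorem bnd_edgeFilling (a : M) (w : List M) :
    bnd 1 (edgeFilling a w) = edge a (a * w.prod) - edgePath a w := by
  rw [edgeFilling, map_sub, bnd_fan, bnd_triangle]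
  abel

end Paths

section ScaledChains

variable {X : Finset G} {S : Set G} {p q k : ℕ}

theorem VRChain.zero : VRChain X S q k 0 := by
  simp [VRChain]

theorem VRChain.add {c d : (Fin (q + 1) → G) →₀ ℤ} (hc : VRChain X S q k c)
    (hd : VRChain X S q k d) : VRChain X S q k (c + d) := by
  classical
  intro σ hσ
  exact (Finset.mem_union.1 (Finsupp.support_add hσ)).elim (hc σ) (hd σ)

theorem VRChain.neg {c : (Fin (q + 1) → G) →₀ ℤ} (hc : VRChain X S q k c) :
    VRChain X S q k (-c) := by
  simpa [VRChain] using hc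

theorem VRChain.sub {c d : (Fin (q + 1) → G) →₀ ℤ} (hc : VRChain X S q k c)
    (hd : VRChain X S q k d) : VRChain X S q k (c - d) := by
  simpa [sub_eq_add_neg] using hc.add hd.neg

theorem VRChain.smul {c : (Fin (q + 1) → G) →₀ ℤ} (hc : VRChain X S q k c) (n : ℤ) :
    VRChain X S q k (n • c) :=
  fun σ hσ => hc σ (Finsupp.support_smul hσ)

theorem VRChain.mono {k' : ℕ} {c : (Fin (q + 1) → G) →₀ ℤ} (hc : VRChain X S q k c)
    (hk : k ≤ k') : VRChain X S q k' c :=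
  fun σ hσ => ⟨(hc σ hσ).1, fun i j => ((hc σ hσ).2 i j).trans hk⟩

theorem VRChain.lift {f : (Fin (p + 1) → G) → (Fin (q + 1) → G) →₀ ℤ}
    {c : (Fin (p + 1) → G) →₀ ℤ} (hf : ∀ σ ∈ c.support, VRChain X S q k (f σ)) :
    VRChain X S q k (Finsupp.lift _ ℤ _ f c) := by
  rw [Finsupp.lift_apply]
  exact Finset.sum_induction _ _ (fun _ _ => VRChain.add) VRChain.zero
    fun σ hσ => (hf σ hσ).smul _

theorem VRChain.single {σ : Fin (q + 1) → G} (hσ : ∀ i j, wordDist X (σ i) (σ j) ≤ k) (n : ℤ) :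
    VRChain X Set.univ q k (Finsupp.single σ n) := by
  intro τ hτ
  rw [Finset.mem_singleton.1 (Finsupp.support_single_subset hτ)]
  exact ⟨fun _ => Set.mem_univ _, hσ⟩

theorem VRChain_edge (hX : Subgroup.closure (X : Set G) = ⊤) {a b : G} (hab : wordDist X a b ≤ k) :
    VRChain X Set.univ 1 k (edge a b) := by
  refine VRChain.single (fun i j => ?_) 1
  fin_cases i <;> fin_cases j <;> simp [wordDist_self, hab, wordDist_comm hX b a]

theorem VRChain_triangle (hX : Subgroup.closure (X : Set G) = ⊤) {a b c : G}
    (hab : wordDist X a b ≤ k) (hac : wordDist X a c ≤ k) (hbc : wordDist X b c ≤ k) :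
    VRChain X Set.univ 2 k (triangle a b c) := by
  refine VRChain.single (fun i j => ?_) 1
  fin_cases i <;> fin_cases j <;>
    simp [wordDist_self, hab, hac, hbc, wordDist_comm hX b a, wordDist_comm hX c a,
      wordDist_comm hX c b]

theorem VRChain_edgePath (hX : Subgroup.closure (X : Set G) = ⊤) {w : List G}
    (hw : ∀ x ∈ w, x ∈ X ∨ x⁻¹ ∈ X) (a : G) :
    VRChain X Set.univ 1 1 (edgePath a w) := by
  induction w generalizing a with
  | nil => exact VRChain.zero
  | cons x w ih =>
    exact (VRChain_edge hX (wordDist_mul_le_one X (hw x List.mem_cons_self) a)).add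
      (ih (fun y hy => hw y (List.mem_cons_of_mem _ hy)) _)

theorem VRChain_fan (hX : Subgroup.closure (X : Set G) = ⊤) {m : ℕ} (hm : 1 ≤ m) {w : List G}
    (hw : ∀ x ∈ w, x ∈ X ∨ x⁻¹ ∈ X) (a b : G) (hab : wordDist X a b + w.length ≤ m) :
    VRChain X Set.univ 2 m (fan a b w) := by
  induction w generalizing b with
  | nil => exact VRChain.zero
  | cons x w ih =>
    have hx := hw x List.mem_cons_self
    have hbx := wordDist_mul_le_one X hx b
    have habx := wordDist_triangle hX a b (b * x)
    simp only [List.length_cons] at hab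
    exact (VRChain_triangle hX (by omega) (by omega) (by omega)).add
      (ih (fun y hy => hw y (List.mem_cons_of_mem _ hy)) (b * x) (by omega))

theorem VRChain_edgeFilling (hX : Subgroup.closure (X : Set G) = ⊤) {m : ℕ} (hm : 1 ≤ m)
    {w : List G} (hw : ∀ x ∈ w, x ∈ X ∨ x⁻¹ ∈ X) (hwm : w.length ≤ m) (a : G) :
    VRChain X Set.univ 2 m (edgeFilling a w) :=
  (VRChain_triangle hX (by simp [wordDist_self]) (by simp [wordDist_self])
    (by simp [wordDist_self])).sub (VRChain_fan hX hm hw a a (by simpa [wordDist_self]))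

end ScaledChains

section Straightening

variable (X : Finset G) (hX : Subgroup.closure (X : Set G) = ⊤)

noncomputable def geodesicWord (g : G) : List G :=
  (exists_word_length_eq_wordLength X hX g).choose

theorem geodesicWord_length (g : G) : (geodesicWord X hX g).length = wordLength X g :=
  (exists_word_length_eq_wordLength X hX g).choose_spec.1

theorem geodesicWord_mem (g : G) : ∀ x ∈ geodesicWord X hX g, x ∈ X ∨ x⁻¹ ∈ X :=
  (exists_word_length_eq_wordLength X hX g).choose_spec.2.1

theorem geodesicWord_prod (g : G) : (geodesicWord X hX g).prod = g :=
  (exists_word_length_eq_wordLength X hX g).choose_spec.2.2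

noncomputable def pathsFromOne : ((Fin 1 → G) →₀ ℤ) →ₗ[ℤ] (Fin 2 → G) →₀ ℤ :=
  Finsupp.lift _ ℤ _ fun σ => edgePath 1 (geodesicWord X hX (σ 0))

noncomputable def straighten : ((Fin 2 → G) →₀ ℤ) →ₗ[ℤ] (Fin 2 → G) →₀ ℤ :=
  Finsupp.lift _ ℤ _ fun σ => edgePath (σ 0) (geodesicWord X hX ((σ 0)⁻¹ * σ 1))

noncomputable def straightenHomotopy : ((Fin 2 → G) →₀ ℤ) →ₗ[ℤ] (Fin 3 → G) →₀ ℤ :=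
  Finsupp.lift _ ℤ _ fun σ => edgeFilling (σ 0) (geodesicWord X hX ((σ 0)⁻¹ * σ 1))

theorem bnd_pathsFromOne (z : (Fin 1 → G) →₀ ℤ) :
    bnd 0 (pathsFromOne X hX z) = z - aug z • vertex 1 := by
  suffices (bnd 0).comp (pathsFromOne X hX) =
      LinearMap.id - (LinearMap.toSpanSingleton ℤ _ (vertex (1 : G))).comp aug from
    LinearMap.congr_fun this z
  refine Finsupp.lhom_ext fun σ n => ?_
  conv_rhs => rw [single_eq_smul_vertex]
  simp [pathsFromOne, aug, vertex, bnd_edgePath, geodesicWord_prod, smul_sub]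

theorem straighten_add_bnd_straightenHomotopy (z : (Fin 2 → G) →₀ ℤ) :
    straighten X hX z + bnd 1 (straightenHomotopy X hX z) = z := by
  suffices straighten X hX + (bnd 1).comp (straightenHomotopy X hX) = LinearMap.id from
    LinearMap.congr_fun this z
  refine Finsupp.lhom_ext fun σ n => ?_
  conv_rhs => rw [LinearMap.id_apply, single_eq_smul_edge]
  simp [straighten, straightenHomotopy, bnd_edgeFilling, geodesicWord_prod, ← smul_add]

theorem VRChain_pathsFromOne (z : (Fin 1 → G) →₀ ℤ) :
    VRChain X Set.univ 1 1 (pathsFromOne X hX z) :=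
  VRChain.lift fun _ _ => VRChain_edgePath hX (geodesicWord_mem X hX _) 1

theorem VRChain_straighten (z : (Fin 2 → G) →₀ ℤ) :
    VRChain X Set.univ 1 1 (straighten X hX z) :=
  VRChain.lift fun _ _ => VRChain_edgePath hX (geodesicWord_mem X hX _) _

theorem VRChain_straightenHomotopy {m : ℕ} (hm : 1 ≤ m) {z : (Fin 2 → G) →₀ ℤ}
    (hz : VRChain X Set.univ 1 m z) : VRChain X Set.univ 2 m (straightenHomotopy X hX z) :=
  VRChain.lift fun σ hσ => VRChain_edgeFilling hX hm (geodesicWord_mem X hX _)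
    ((geodesicWord_length X hX _).trans_le ((hz σ hσ).2 0 1)) _

end Straightening

section Filling

variable {X : Finset G}

theorem BoundsAt.mono {S : Set G} {q k l l' : ℕ} (h : BoundsAt X S q k l) (hl : l ≤ l') :
    BoundsAt X S q k l' := by
  cases q <;>
  · intro z hz hz₀
    obtain ⟨c, hc, rfl⟩ := h z hz hz₀
    exact ⟨c, hc.mono hl, rfl⟩

theorem boundsAt_zero_one (hX : Subgroup.closure (X : Set G) = ⊤) (k : ℕ) :
    BoundsAt X Set.univ 0 k 1 := fun z _ hz =>
  ⟨pathsFromOne X hX z, VRChain_pathsFromOne X hX z, by simp [bnd_pathsFromOne, hz]⟩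

theorem boundsAt_one_of_boundsAt_one_one (hX : Subgroup.closure (X : Set G) = ⊤) {l : ℕ}
    (hl : 1 ≤ l) (h : BoundsAt X Set.univ 1 1 l) (k : ℕ) :
    BoundsAt X Set.univ 1 k (max l k) := by
  intro z hz hz₀
  have hcycle : bnd 0 (straighten X hX z) = 0 := by
    have := congrArg (bnd 0) (straighten_add_bnd_straightenHomotopy X hX z)
    rwa [map_add, bnd_bnd, add_zero, hz₀] at this
  obtain ⟨c, hc, hcz⟩ := h _ (VRChain_straighten X hX z) hcycle
  refine ⟨c + straightenHomotopy X hX z, (hc.mono (le_max_left l k)).add ?_, ?_⟩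
  · exact VRChain_straightenHomotopy X hX (hl.trans (le_max_left l k))
      (hz.mono (le_max_right l k))
  · rw [map_add, hcz, straighten_add_bnd_straightenHomotopy]

end Filling

/-- If there is `l ≥ 1` such that reduced `1`-cycles at scale `1` bound at scale `l`,
then `G` is of type `FP₂`. -/
theorem stmt4 {G : Type*} [Group G] (X : Finset G)
    (hX : Subgroup.closure (X : Set G) = ⊤)
    (h : ∃ l ≥ 1, BoundsAt X Set.univ 1 1 l) :
    TypeFP X Set.univ 2 := by
  intro q hq k
  interval_cases q
  · exact ⟨max k 1, le_max_left k 1, (boundsAt_zero_one hX k).mono (le_max_right k 1)⟩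
  · obtain ⟨l, hl, hB⟩ := h
    exact ⟨max l k, le_max_right l k, boundsAt_one_of_boundsAt_one_one hX hl hB k⟩
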